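/- arXiv:2302.09239 — 5 statements merged into one kernel-verified Lean document; each statement's English description precedes it below -/
import Mathlib

section
/- Let Q be a quad vector of length n and let Q̂ of length 3εn be obtained by replacing each character of Q by a run of 3ε copies of itself (ε ≥ 1). Then for each run (positions [3εi, 3ε(i+1))), the exact rank of the character Q[i] increases by 3ε ≥ 2ε across the run, while the rank of every other character increases by 0 ≤ ε across the run. Hence Q can be reconstructed from any oracle answering rank queries on Q̂ with additive error at most ε. -/
/-! Every position of the run `[3εi, 3ε(i+1))` of `Q̂` carries `Q[i]`, so across the run the exact
rank of `Q[i]` grows by `3ε` and that of any other character by `0`. An oracle off by at most `ε`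
at each end therefore sees a growth of at least `3ε - ε = 2ε` for `Q[i]` and of at most `ε < 2ε`
for every other character. -/

/-- Rank in the expansion `Q̂` of `Q`, where each character of `Q` is
replaced by a run of `3ε` copies: `Q̂[k] = Q[⌊k / (3ε)⌋]`. -/
def rankHat (ε : ℕ) (Q : ℕ → Fin 4) (α : Fin 4) (j : ℕ) : ℕ :=
  ((Finset.range j).filter (fun k => Q (k / (3 * ε)) = α)).card

open Finset

theorem card_filter_range_mul_succ_div (m : ℕ) (p : ℕ → Prop) [DecidablePred p] (i : ℕ) :
    #{k ∈ range (m * (i + 1)) | p (k / m)} =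
      #{k ∈ range (m * i) | p (k / m)} + if p i then m else 0 := by
  rcases m.eq_zero_or_pos with rfl | hm
  · simp
  have hrun : ∀ k ∈ range m, (m * i + k) / m = i := fun k hk => by
    rw [Nat.add_comm, Nat.add_mul_div_left _ _ hm, Nat.div_eq_of_lt (mem_range.mp hk), zero_add]
  simp only [← Nat.count_eq_card_filter_range, mul_add_one, Nat.count_add]
  rw [Nat.count_eq_card_filter_range _ m]
  split_ifs with h
  · rw [filter_true_of_mem fun k hk => (hrun k hk).symm ▸ h, card_range]
  · rw [filter_false_of_mem fun k hk => (hrun k hk).symm ▸ h, card_empty]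

theorem rankHat_mul_succ (ε : ℕ) (Q : ℕ → Fin 4) (α : Fin 4) (i : ℕ) :
    rankHat ε Q α (3 * ε * (i + 1)) =
      rankHat ε Q α (3 * ε * i) + if Q i = α then 3 * ε else 0 :=
  card_filter_range_mul_succ_div (3 * ε) (Q · = α) i

/-- Across each run `[3εi, 3ε(i+1))` of the expanded vector `Q̂`, the rank of
`Q[i]` increases by exactly `3ε ≥ 2ε`, while the rank of every other
character does not increase (so by at most `ε`).  Hence `Q` can be
reconstructed from any oracle answering rank queries on `Q̂` with additive
error at most `ε`: `Q[i]` is exactly the character whose oracle value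
increases by at least `2ε` across the run. -/
theorem reconstruct_from_approx_rank (ε : ℕ) (hε : 1 ≤ ε) (Q : ℕ → Fin 4) :
    (∀ i : ℕ,
        rankHat ε Q (Q i) (3 * ε * (i + 1)) =
          rankHat ε Q (Q i) (3 * ε * i) + 3 * ε ∧ 2 * ε ≤ 3 * ε) ∧
    (∀ i : ℕ, ∀ β : Fin 4, β ≠ Q i →
        rankHat ε Q β (3 * ε * (i + 1)) = rankHat ε Q β (3 * ε * i)) ∧
    (∀ g : Fin 4 → ℕ → ℕ,
        (∀ α j, rankHat ε Q α j ≤ g α j ∧ g α j ≤ rankHat ε Q α j + ε) →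
        ∀ i : ℕ, ∀ α : Fin 4,
          Q i = α ↔ g α (3 * ε * i) + 2 * ε ≤ g α (3 * ε * (i + 1))) := by
  refine ⟨fun i => ⟨?_, by omega⟩, fun i β hβ => ?_, fun g hg i α => ?_⟩
  · rw [rankHat_mul_succ, if_pos rfl]
  · rw [rankHat_mul_succ, if_neg hβ.symm, add_zero]
  · have hstep := rankHat_mul_succ ε Q α i
    obtain ⟨hlo, hhi⟩ := hg α (3 * ε * i)
    obtain ⟨hlo', hhi'⟩ := hg α (3 * ε * (i + 1))
    by_cases h : Q i = α
    · simp only [h, if_true, true_iff] at hstep ⊢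
      omega
    · simp only [h, if_false, false_iff, not_le] at hstep ⊢
      omega
end

section
/- There is a data structure for rank with additive approximation matching the following correctness property: split Q[1,n] into blocks of size ε/2; for each symbol α store a bit vector B_α where bit i is set iff block i of Q contains the j-th occurrence of α for some j that is a multiple of ε/2. Then for any position i, letting j = ⌊2i/ε⌋ and k = rank_1(j−1) on B_α, the value r̃ = k·ε/2 satisfies r̃ ≤ rank_α(i) ≤ r̃ + ε, where rank_α(i) is the exact rank. -/
open scoped Classical

/-- `qrank n Q α i` counts occurrences of `α` among the first `i` positions
of the quad vector `Q`. -/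
def qrank (n : ℕ) (Q : Fin n → Fin 4) (α : Fin 4) (i : ℕ) : ℕ :=
  (Finset.univ.filter (fun p : Fin n => (p : ℕ) < i ∧ Q p = α)).card

/-- Bit `b` of the bit vector `B_α` (blocks of size `h = ε/2`): it is set iff
block `b` of `Q` contains the `j`-th occurrence of `α` for some positive
multiple `j` of `h`. -/
def Bvec (n h : ℕ) (Q : Fin n → Fin 4) (α : Fin 4) (b : ℕ) : Prop :=
  ∃ p : Fin n, b * h ≤ (p : ℕ) ∧ (p : ℕ) < (b + 1) * h ∧ Q p = α ∧
    1 ≤ qrank n Q α ((p : ℕ) + 1) ∧ h ∣ qrank n Q α ((p : ℕ) + 1)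

/-!
Write `f b = ⌊rank_α(b h) / h⌋`. The occurrences of `α` in block `b` have ranks exactly the
integers in `(rank_α(b h), rank_α((b + 1) h)]`, so bit `b` of `B_α` is set iff `f` increases
from `b` to `b + 1`. A block holds at most `h` symbols, so `f` increases by at most one per
block, and the number of set bits before block `⌊i / h⌋` is exactly `f ⌊i / h⌋`. Hence
`k h ≤ rank_α(⌊i / h⌋ h) < k h + h`, and the fewer than `h` remaining positions up to `i` add
less than `h`.
-/

open Finset

theorem card_filter_range_lt_succ (f : ℕ → ℕ) (hf : Monotone f) (hstep : ∀ b, f (b + 1) ≤ f b + 1)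
    (m : ℕ) : #{b ∈ range m | f b < f (b + 1)} = f m - f 0 := by
  induction m with
  | zero => simp
  | succ m ih =>
    have := hf (Nat.zero_le m)
    have := hf (Nat.le_add_right m 1)
    have := hstep m
    rw [range_add_one, filter_insert]
    split_ifs with hlt
    · rw [card_insert_of_notMem (by simp), ih]; omega
    · rw [ih]; omega

section qrank

variable {n : ℕ} {Q : Fin n → Fin 4} {α : Fin 4}

theorem qrank_zero : qrank n Q α 0 = 0 := by
  simp [qrank]

theorem qrank_mono : Monotone (qrank n Q α) := fun _ _ hij =>
  card_le_card fun p hp => by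
    simp only [mem_filter, mem_univ, true_and] at hp ⊢
    exact ⟨hp.1.trans_le hij, hp.2⟩

theorem qrank_succ (p : ℕ) :
    qrank n Q α (p + 1) = qrank n Q α p + #{q : Fin n | (q : ℕ) = p ∧ Q q = α} := by
  rw [qrank, qrank, ← card_union_of_disjoint, ← filter_or]
  · congr 1; ext q; simp only [mem_filter, mem_univ, true_and]; omega
  · exact disjoint_filter.2 fun q _ h₁ h₂ => by omega

theorem card_occurrence_at_le_one (p : ℕ) : #{q : Fin n | (q : ℕ) = p ∧ Q q = α} ≤ 1 :=
  card_le_one.2 fun a ha b hb => by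
    simp only [mem_filter] at ha hb
    exact Fin.ext (ha.2.1.trans hb.2.1.symm)

theorem qrank_succ_le (p : ℕ) : qrank n Q α (p + 1) ≤ qrank n Q α p + 1 :=
  (qrank_succ p).trans_le (by grw [card_occurrence_at_le_one])

theorem qrank_add_le (i d : ℕ) : qrank n Q α (i + d) ≤ qrank n Q α i + d := by
  induction d with
  | zero => rfl
  | succ d ih => grw [← add_assoc, qrank_succ_le, ih]; omega

theorem qrank_succ_of_eq {q : Fin n} (hq : Q q = α) : qrank n Q α (q + 1) = qrank n Q α q + 1 := by
  have : 0 < #{q' : Fin n | (q' : ℕ) = q ∧ Q q' = α} := card_pos.2 ⟨q, by simp [hq]⟩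
  have := card_occurrence_at_le_one (Q := Q) (α := α) q
  rw [qrank_succ]; omega

theorem exists_eq_of_qrank_lt_succ {p : ℕ} (h : qrank n Q α p < qrank n Q α (p + 1)) :
    ∃ q : Fin n, (q : ℕ) = p ∧ Q q = α := by
  rw [qrank_succ, Nat.lt_add_right_iff_pos, card_pos] at h
  obtain ⟨q, hq⟩ := h
  exact ⟨q, (mem_filter.1 hq).2⟩

theorem exists_qrank_succ_eq {x y t : ℕ} (hx : qrank n Q α x < t) (hy : t ≤ qrank n Q α y) :
    ∃ q : Fin n, x ≤ q ∧ q < y ∧ Q q = α ∧ qrank n Q α (q + 1) = t := by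
  induction y with
  | zero => rw [qrank_zero] at hy; omega
  | succ y ih =>
    by_cases hty : t ≤ qrank n Q α y
    · obtain ⟨q, hxq, hqy, hq, hqt⟩ := ih hty
      exact ⟨q, hxq, hqy.trans y.lt_succ_self, hq, hqt⟩
    · obtain ⟨q, rfl, hq⟩ := exists_eq_of_qrank_lt_succ
        (show qrank n Q α y < qrank n Q α (y + 1) by omega)
      have hxq : x ≤ q := by
        by_contra! hqx
        have := qrank_mono (Q := Q) (α := α) (show (q : ℕ) + 1 ≤ x by omega)
        omega
      have := qrank_succ_le (Q := Q) (α := α) q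
      exact ⟨q, hxq, q.1.lt_succ_self, hq, by omega⟩

theorem bvec_iff {h b : ℕ} (hh : 0 < h) :
    Bvec n h Q α b ↔ qrank n Q α (b * h) / h < qrank n Q α ((b + 1) * h) / h := by
  constructor
  · rintro ⟨p, hbp, hpb, hp, -, c, hc⟩
    have hlo : qrank n Q α (b * h) < h * c :=
      hc ▸ (qrank_mono hbp).trans_lt (qrank_succ_of_eq hp ▸ Nat.lt_succ_self _)
    have hhi : h * c ≤ qrank n Q α ((b + 1) * h) := hc ▸ qrank_mono hpb
    calc qrank n Q α (b * h) / h < c := (Nat.div_lt_iff_lt_mul hh).2 (by linarith)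
      _ ≤ qrank n Q α ((b + 1) * h) / h := (Nat.le_div_iff_mul_le hh).2 (by linarith)
  · intro hlt
    -- the first multiple of `h` above `qrank (b * h)` is reached inside block `b`
    set t := (qrank n Q α (b * h) / h + 1) * h
    have hlo : qrank n Q α (b * h) < t := by
      have := Nat.lt_div_mul_add (a := qrank n Q α (b * h)) hh
      simpa only [t, add_mul, one_mul] using this
    have hhi : t ≤ qrank n Q α ((b + 1) * h) := (Nat.le_div_iff_mul_le hh).1 hlt
    obtain ⟨q, hbq, hqb, hq, hqt⟩ := exists_qrank_succ_eq hlo hhi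
    exact ⟨q, hbq, hqb, hq, hqt ▸ Nat.one_le_iff_ne_zero.2 (by positivity), hqt ▸ dvd_mul_left h _⟩

theorem card_filter_bvec {h : ℕ} (hh : 0 < h) [DecidablePred (Bvec n h Q α)] (m : ℕ) :
    #{b ∈ range m | Bvec n h Q α b} = qrank n Q α (m * h) / h := by
  have hmono : Monotone fun b => qrank n Q α (b * h) / h := fun b c hbc =>
    Nat.div_le_div_right (qrank_mono (Nat.mul_le_mul_right h hbc))
  have hstep (b : ℕ) : qrank n Q α ((b + 1) * h) / h ≤ qrank n Q α (b * h) / h + 1 := by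
    rw [← Nat.add_div_right _ hh, add_mul, one_mul]
    exact Nat.div_le_div_right (qrank_add_le _ _)
  rw [filter_congr fun b _ => bvec_iff hh, card_filter_range_lt_succ _ hmono hstep]
  simp [qrank_zero]

end qrank

theorem approx_rank_upper_general (n h : ℕ) (hh : 1 ≤ h) (Q : Fin n → Fin 4)
    (α : Fin 4) (i : ℕ) :
    letI := Classical.decPred (Bvec n h Q α)
    let k := ((Finset.range (i / h)).filter (Bvec n h Q α)).card
    k * h ≤ qrank n Q α i ∧ qrank n Q α i ≤ k * h + 2 * h := by
  intro k
  have hk : k = qrank n Q α (i / h * h) / h := card_filter_bvec hh _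
  have hblock : qrank n Q α (i / h * h) ≤ qrank n Q α i := qrank_mono (Nat.div_mul_le_self i h)
  refine ⟨hk ▸ (Nat.div_mul_le_self _ h).trans hblock, ?_⟩
  have htail : qrank n Q α i ≤ qrank n Q α (i / h * h) + i % h := by
    conv_lhs => rw [← Nat.div_add_mod' i h]
    exact qrank_add_le _ _
  have hfloor := Nat.lt_div_mul_add (a := qrank n Q α (i / h * h)) hh
  have hmod := Nat.mod_lt i hh
  rw [hk]
  omega

/-- Correctness of the additive-approximation rank structure: with blocks of
size `h = ε/2` and the bit vectors `B_α` as above, for any position `i`,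
letting `k` be the number of set bits of `B_α` strictly before the block
containing `i`, the value `r̃ = k * (ε/2)` satisfies
`r̃ ≤ rank_α(i) ≤ r̃ + ε`. -/
theorem approx_rank_upper (n h : ℕ) (hh : 1 ≤ h) (Q : Fin n → Fin 4)
    (α : Fin 4) (i : ℕ) (hi : i ≤ n) :
    letI := Classical.decPred (Bvec n h Q α)
    let k := ((Finset.range (i / h)).filter (Bvec n h Q α)).card
    k * h ≤ qrank n Q α i ∧ qrank n Q α i ≤ k * h + 2 * h :=
  approx_rank_upper_general n h hh Q α i
end

section
/- Number of monotone sequences bound underlying Elias–Fano: the number of nondecreasing sequences of k integers taken from a universe of size u is C(u+k−1, k), and this is at most 2^{k(2 + ⌈log₂(u/k)⌉)} when k ≤ u; hence any such sequence can be encoded in k(2 + ⌈log₂(u/k)⌉) bits. -/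
open Finset

/-- A strictly monotone `ℕ`-valued function on `Fin k` grows at least as fast as the index. -/
private lemma strictMono_gap {k : ℕ} {H : Fin k → ℕ} (hH : StrictMono H) :
    ∀ d (i j : Fin k), (i : ℕ) + d = (j : ℕ) → H i + d ≤ H j := by
  intro d
  induction d with
  | zero =>
      intro i j hij
      have : i = j := Fin.ext (by omega)
      simp [this]
  | succ d ih =>
      intro i j hij
      have hjk : (i : ℕ) + d < k := by
        have := j.isLt; omega
      have h1 : H i + d ≤ H ⟨(i : ℕ) + d, hjk⟩ := ih i _ rfl
      have h2 : H ⟨(i : ℕ) + d, hjk⟩ < H j := hH (by simp [Fin.lt_def]; omega)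
      omega

private lemma choose_le_two_pow (n k : ℕ) : n.choose k ≤ 2 ^ n := by
  rcases le_or_gt k n with h | h
  · rw [← Nat.sum_range_choose n]
    exact Finset.single_le_sum (fun i _ => Nat.zero_le _) (Finset.mem_range.2 (by omega))
  · simp [Nat.choose_eq_zero_of_lt h]

private lemma succ_pow_le_three_mul (k : ℕ) : (k + 1) ^ k ≤ 3 * k ^ k := by
  rcases Nat.eq_zero_or_pos k with rfl | hk
  · norm_num
  have hk0 : (0 : ℝ) < (k : ℝ) := by exact_mod_cast hk
  have key : ((k : ℝ) + 1) ^ k ≤ 3 * (k : ℝ) ^ k := by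
    have h1 : (k : ℝ) + 1 = (1 + 1 / k) * k := by field_simp
    have h2 : (1 + 1 / (k : ℝ)) ^ k ≤ Real.exp (1 / k) ^ k := by
      apply pow_le_pow_left₀ (by positivity)
      have := Real.add_one_le_exp (1 / (k : ℝ))
      linarith
    have h3 : Real.exp (1 / (k : ℝ)) ^ k = Real.exp 1 := by
      rw [← Real.exp_nat_mul]
      congr 1
      field_simp
    have h4 : Real.exp 1 ≤ 3 := by
      have := Real.exp_one_lt_d9
      linarith
    calc ((k : ℝ) + 1) ^ k = (1 + 1 / k) ^ k * (k : ℝ) ^ k := by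
          rw [h1, mul_pow]
      _ ≤ Real.exp 1 * (k : ℝ) ^ k := by
          apply mul_le_mul_of_nonneg_right _ (by positivity)
          rw [← h3]; exact h2
      _ ≤ 3 * (k : ℝ) ^ k := by
          apply mul_le_mul_of_nonneg_right h4 (by positivity)
  exact_mod_cast (by exact_mod_cast key : (((k + 1) ^ k : ℕ) : ℝ) ≤ ((3 * k ^ k : ℕ) : ℝ))

private lemma pow_self_le_factorial (k : ℕ) : k ^ k ≤ 3 ^ k * k.factorial := by
  induction k with
  | zero => simp
  | succ k ih =>
      calc (k + 1) ^ (k + 1) = (k + 1) ^ k * (k + 1) := by ring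
        _ ≤ 3 * k ^ k * (k + 1) :=
            Nat.mul_le_mul_right _ (succ_pow_le_three_mul k)
        _ ≤ 3 * (3 ^ k * k.factorial) * (k + 1) := by
            exact Nat.mul_le_mul_right _ (Nat.mul_le_mul_left _ ih)
        _ = 3 ^ (k + 1) * (k + 1).factorial := by
            rw [Nat.factorial_succ]; ring

/-- The number of nondecreasing sequences of `k` integers from a universe of
size `u` is `C(u+k−1, k)`, and for `1 ≤ k ≤ u` this is at most
`2^(k(2 + ⌈log₂⌈u/k⌉⌉))`; hence every such sequence can be encoded in
`k(2 + ⌈log₂(u/k)⌉)` bits (the bound underlying Elias–Fano encoding). -/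
theorem monotone_count_elias_fano (u k : ℕ) (hk : 1 ≤ k) (hku : k ≤ u) :
    Nat.card {f : Fin k → Fin u // Monotone f} = (u + k - 1).choose k ∧
      (u + k - 1).choose k ≤ 2 ^ (k * (2 + Nat.clog 2 ((u + k - 1) / k))) := by
  have hu : 1 ≤ u := hk.trans hku
  set n := u + k - 1 with hn
  have hnk : k ≤ n := by omega
  constructor
  · -- counting part
    -- forward map: monotone functions into k-subsets of Fin n, via f ↦ (i ↦ f i + i)
    let g : {f : Fin k → Fin u // Monotone f} → Fin k → Fin n := fun f i =>
      ⟨(f.1 i : ℕ) + i, by have h1 := (f.1 i).isLt; have h2 := i.isLt; omega⟩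
    have hg : ∀ f, StrictMono (g f) := by
      intro f i j hij
      have h1 : (f.1 i : ℕ) ≤ f.1 j := f.2 hij.le
      have h2 : (i : ℕ) < j := hij
      simp only [g, Fin.mk_lt_mk]
      omega
    have hgmem : ∀ f (x : Fin k), g f x ∈ Finset.univ.image (g f) := fun f x =>
      Finset.mem_image_of_mem _ (Finset.mem_univ x)
    let Φ : {f : Fin k → Fin u // Monotone f} → {s : Finset (Fin n) // s.card = k} :=
      fun f => ⟨Finset.univ.image (g f), by
        rw [Finset.card_image_of_injective _ (hg f).injective, Finset.card_univ,
          Fintype.card_fin]⟩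
    have hΦ : Function.Injective Φ := by
      intro f₁ f₂ h
      have hs : (Φ f₁).1 = (Φ f₂).1 := congrArg Subtype.val h
      have e₁ : g f₁ = (Φ f₁).1.orderEmbOfFin (Φ f₁).2 :=
        Finset.orderEmbOfFin_unique (Φ f₁).2 (hgmem f₁) (hg f₁)
      have e₂ : g f₂ = (Φ f₁).1.orderEmbOfFin (Φ f₁).2 :=
        Finset.orderEmbOfFin_unique (Φ f₁).2 (fun x => hs ▸ hgmem f₂ x) (hg f₂)
      have hgeq : g f₁ = g f₂ := e₁.trans e₂.symm
      apply Subtype.ext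
      funext i
      have := congrFun hgeq i
      have hv : (f₁.1 i : ℕ) + i = (f₂.1 i : ℕ) + i := congrArg Fin.val this
      exact Fin.ext (by omega)
    -- backward map: k-subsets into monotone functions, via s ↦ (i ↦ (enumeration of s at i) - i)
    have Hfacts : ∀ (s : {s : Finset (Fin n) // s.card = k}),
        StrictMono (fun i : Fin k => ((s.1.orderEmbOfFin s.2 i : Fin n) : ℕ)) := by
      intro s i j hij
      exact (s.1.orderEmbOfFin s.2).strictMono hij
    have Hlb : ∀ (s : {s : Finset (Fin n) // s.card = k}) (i : Fin k),
        (i : ℕ) ≤ (s.1.orderEmbOfFin s.2 i : ℕ) := by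
      intro s i
      have := strictMono_gap (Hfacts s) (i : ℕ) ⟨0, hk⟩ i (by simp)
      omega
    have Hub : ∀ (s : {s : Finset (Fin n) // s.card = k}) (i : Fin k),
        (s.1.orderEmbOfFin s.2 i : ℕ) + (k - 1 - (i : ℕ)) < n := by
      intro s i
      have hlast : (k - 1 : ℕ) < k := by omega
      have h1 := strictMono_gap (Hfacts s) (k - 1 - (i : ℕ)) i ⟨k - 1, hlast⟩
        (by simp; have := i.isLt; omega)
      have h2 := (s.1.orderEmbOfFin s.2 ⟨k - 1, hlast⟩).isLt
      omega
    let Ψ : {s : Finset (Fin n) // s.card = k} → {f : Fin k → Fin u // Monotone f} :=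
      fun s => ⟨fun i => ⟨(s.1.orderEmbOfFin s.2 i : ℕ) - i, by
          have h1 := Hub s i
          have h2 := i.isLt
          omega⟩, by
        intro i j hij
        have h1 := strictMono_gap (Hfacts s) ((j : ℕ) - i) i j (by
          have : (i : ℕ) ≤ j := hij
          omega)
        have h2 : (i : ℕ) ≤ j := hij
        simp only [Fin.mk_le_mk]
        omega⟩
    have hΨ : Function.Injective Ψ := by
      intro s₁ s₂ h
      have hfun : ∀ i : Fin k,
          (s₁.1.orderEmbOfFin s₁.2 i : ℕ) - i = (s₂.1.orderEmbOfFin s₂.2 i : ℕ) - i := by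
        intro i
        exact congrArg Fin.val (congrFun (congrArg Subtype.val h) i)
      have heq : (s₁.1.orderEmbOfFin s₁.2 : Fin k → Fin n) = s₂.1.orderEmbOfFin s₂.2 := by
        funext i
        have h1 := Hlb s₁ i
        have h2 := Hlb s₂ i
        have h3 := hfun i
        exact Fin.ext (by omega)
      apply Subtype.ext
      apply Finset.coe_injective
      rw [← Finset.range_orderEmbOfFin s₁.1 s₁.2, ← Finset.range_orderEmbOfFin s₂.1 s₂.2]
      rw [heq]
    have hcard : Nat.card {s : Finset (Fin n) // s.card = k} = n.choose k := by
      rw [Nat.card_eq_fintype_card, Fintype.card_finset_len, Fintype.card_fin]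
    have h1 := Nat.card_le_card_of_injective Φ hΦ
    have h2 := Nat.card_le_card_of_injective Ψ hΨ
    omega
  · -- the inequality
    set m := n / k with hm
    set c := Nat.clog 2 m with hc
    have hk0 : 0 < k := hk
    have hdm : k * m + n % k = n := by rw [hm]; exact Nat.div_add_mod n k
    have hmod := Nat.mod_lt n hk0
    have hm1 : 1 ≤ m := by
      rw [hm]
      exact (Nat.one_le_div_iff hk0).2 hnk
    have hnlt : n < k * (m + 1) := by
      have hx : k * (m + 1) = k * m + k := by ring
      omega
    have hpow : m ≤ 2 ^ c := Nat.le_pow_clog (by norm_num) m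
    have hfinal : (4 * m) ^ k ≤ 2 ^ (k * (2 + c)) := by
      calc (4 * m) ^ k ≤ (4 * 2 ^ c) ^ k :=
            Nat.pow_le_pow_left (Nat.mul_le_mul_left _ hpow) k
        _ = (2 ^ (2 + c)) ^ k := by rw [pow_add]; norm_num
        _ = 2 ^ (k * (2 + c)) := by rw [← pow_mul, Nat.mul_comm]
    rcases le_or_gt m 3 with hm3 | hm3
    · -- small m: use choose ≤ 2^n
      have hmc : m + 1 ≤ 2 + c := by
        rcases Nat.lt_or_ge c 2 with hc2 | hc2
        · have hp := hpow
          rcases Nat.eq_zero_or_pos c with h0 | h1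
          · rw [h0] at hp; norm_num at hp; omega
          · have h1' : c = 1 := by omega
            rw [h1'] at hp; norm_num at hp; omega
        · omega
      calc n.choose k ≤ 2 ^ n := choose_le_two_pow n k
        _ ≤ 2 ^ (k * (2 + c)) := by
            apply Nat.pow_le_pow_right (by norm_num)
            calc n ≤ k * (m + 1) := hnlt.le
              _ ≤ k * (2 + c) := Nat.mul_le_mul_left _ hmc
    · -- large m: use choose ≤ n^k / k!
      have key : k.factorial * n.choose k ≤ k.factorial * (4 * m) ^ k := by
        calc k.factorial * n.choose k = n.descFactorial k :=
              (Nat.descFactorial_eq_factorial_mul_choose n k).symm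
          _ ≤ n ^ k := Nat.descFactorial_le_pow n k
          _ ≤ (k * (m + 1)) ^ k := Nat.pow_le_pow_left hnlt.le k
          _ = k ^ k * (m + 1) ^ k := mul_pow _ _ _
          _ ≤ 3 ^ k * k.factorial * (m + 1) ^ k :=
              Nat.mul_le_mul_right _ (pow_self_le_factorial k)
          _ = k.factorial * (3 * (m + 1)) ^ k := by rw [mul_pow]; ring
          _ ≤ k.factorial * (4 * m) ^ k := by
              apply Nat.mul_le_mul_left
              apply Nat.pow_le_pow_left
              omega
      have := Nat.le_of_mul_le_mul_left key (Nat.factorial_pos k)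
      exact this.trans hfinal
end

section
/- Wavelet tree rank recursion: let T be a text over [0, 2^ℓ), let B be the bit vector of most-significant bits of T, and let T_0 (resp. T_1) be the subsequence of characters of T whose MSB is 0 (resp. 1), each with the MSB stripped. Then for any character α with MSB b and remaining bits α', and any position i, rank_α(i) over T equals rank_{α'}(rank_b(i)) over T_b, where rank_b(i) counts occurrences of bit b among the first i bits of B. -/
/-! The first `i` characters of `T` with MSB `b` are exactly the first `rank_b(i)` characters of
the filtered subsequence, and among characters with MSB `b` the character `α` is recognised by its
remaining bits alone, since `c = α ↔ c / m = α / m ∧ c % m = α % m` for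
`m = 2 ^ (ℓ - 1)`. -/

/-- Rank of symbol `a` in the first `i` elements of the list `l`. -/
def lrank (l : List ℕ) (a : ℕ) (i : ℕ) : ℕ := (l.take i).count a

namespace List

variable {α β γ : Type*}

theorem take_countP_filter_eq_filter_take (p : α → Bool) (l : List α) (i : ℕ) :
    (l.filter p).take ((l.take i).countP p) = (l.take i).filter p := by
  conv_lhs => arg 2; rw [← take_append_drop i l, filter_append]
  exact take_left' countP_eq_length_filter.symm

theorem count_eq_count_map_filter [BEq α] [LawfulBEq α] [BEq β] [LawfulBEq β]
    [BEq γ] [LawfulBEq γ]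
    (f : α → γ) (g : α → β) {a : α} (hfg : ∀ c, f c = f a → g c = g a → c = a)
    (l : List α) : l.count a = ((l.filter (f · == f a)).map g).count (g a) := by
  rw [count_eq_countP, count_eq_countP, countP_map, countP_filter]
  refine countP_congr fun c _ => ?_
  simp only [Function.comp_apply, Bool.and_eq_true, beq_iff_eq]
  exact ⟨fun h => h ▸ ⟨rfl, rfl⟩, fun ⟨hg, hf⟩ => hfg c hf hg⟩

end List

theorem lrank_eq_lrank_mod_lrank_div (m : ℕ) (l : List ℕ) (a i : ℕ) :
    lrank l a i =
      lrank ((l.filter (· / m == a / m)).map (· % m)) (a % m)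
        (lrank (l.map (· / m)) (a / m) i) := by
  have hdiv : lrank (l.map (· / m)) (a / m) i = (l.take i).countP (· / m == a / m) := by
    rw [lrank, ← List.map_take, List.count_eq_countP, List.countP_map]
    rfl
  rw [hdiv, lrank, lrank, ← List.map_take, List.take_countP_filter_eq_filter_take,
    List.count_eq_count_map_filter (· / m) (· % m) fun _ hq hr => Nat.ext_div_modEq hq hr]

theorem wavelet_tree_rank_recursion_general (ℓ n : ℕ)
    (T : Fin n → Fin (2 ^ ℓ)) (α : Fin (2 ^ ℓ)) (i : ℕ) :
    let tl : List ℕ := (List.ofFn T).map (fun c => (c : ℕ))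
    let b : ℕ := (α : ℕ) / 2 ^ (ℓ - 1)
    let B : List ℕ := tl.map (fun c => c / 2 ^ (ℓ - 1))
    let Tb : List ℕ :=
      (tl.filter (fun c => c / 2 ^ (ℓ - 1) == b)).map (fun c => c % 2 ^ (ℓ - 1))
    lrank tl (α : ℕ) i = lrank Tb ((α : ℕ) % 2 ^ (ℓ - 1)) (lrank B b i) :=
  lrank_eq_lrank_mod_lrank_div (2 ^ (ℓ - 1)) _ α i

/-- Wavelet tree rank recursion: for a text `T` over `[0, 2^ℓ)`, `B` the
sequence of most-significant bits, `T_b` the stable subsequence of characters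
with MSB `b` with the MSB stripped, and a character `α` with MSB `b` and
remaining bits `α'`: `rank_α(i)` over `T` equals `rank_{α'}(rank_b(i))` over
`T_b`. -/
theorem wavelet_tree_rank_recursion (ℓ n : ℕ) (hℓ : 1 ≤ ℓ)
    (T : Fin n → Fin (2 ^ ℓ)) (α : Fin (2 ^ ℓ)) (i : ℕ) :
    let tl : List ℕ := (List.ofFn T).map (fun c => (c : ℕ))
    let b : ℕ := (α : ℕ) / 2 ^ (ℓ - 1)
    let B : List ℕ := tl.map (fun c => c / 2 ^ (ℓ - 1))
    let Tb : List ℕ :=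
      (tl.filter (fun c => c / 2 ^ (ℓ - 1) == b)).map (fun c => c % 2 ^ (ℓ - 1))
    lrank tl (α : ℕ) i = lrank Tb ((α : ℕ) % 2 ^ (ℓ - 1)) (lrank B b i) :=
  wavelet_tree_rank_recursion_general ℓ n T α i
end

section
/- 4-ary wavelet tree rank recursion: let T be a text over [0, 4^ℓ), let Q be the quad vector of most-significant base-4 digits of T, and let T_q (q ∈ {0,1,2,3}) be the subsequence of characters of T whose top digit is q, each with the top digit stripped. Then for any character α with top base-4 digit q and remainder α', and any position i, rank_α(i) over T equals rank_{α'}(rank_q(i)) over T_q, where rank_q(i) counts occurrences of q among the first i symbols of Q. -/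
theorem lrank_key (m a : ℕ) (l : List ℕ) : ∀ i, lrank l a i =
    lrank ((l.filter (fun c => c / m == a / m)).map (fun c => c % m)) (a % m)
      (lrank (l.map (fun c => c / m)) (a / m) i) := by
  induction l with
  | nil => intro i; simp [lrank]
  | cons c l ih =>
    intro i
    cases i with
    | zero => simp [lrank]
    | succ j =>
      by_cases h : c / m = a / m
      · have hc : (c = a) ↔ (c % m = a % m) := by
          constructor
          · rintro rfl; rfl
          · intro h2
            have e1 := Nat.div_add_mod c m
            have e2 := Nat.div_add_mod a m
            rw [h, h2] at e1
            exact e1.symm.trans e2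
        simp only [lrank, List.map_cons, List.take_succ_cons, List.count_cons,
          List.filter_cons, h, beq_self_eq_true, if_true] at *
        rw [ih j]
        by_cases hca : c = a
        · simp [hca, hc.mp hca, lrank]
        · have hcm : ¬ c % m = a % m := fun h2 => hca (hc.mpr h2)
          simp [hca, hcm, lrank]
      · have hca : c ≠ a := fun e => h (by rw [e])
        simp only [lrank, List.map_cons, List.take_succ_cons, List.count_cons,
          List.filter_cons, h, hca, if_false, beq_iff_eq, add_zero] at *
        exact ih j

/-- 4-ary wavelet tree rank recursion: for a text `T` over `[0, 4^ℓ)`, `Q`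
the sequence of most-significant base-4 digits, `T_q` the stable subsequence
of characters with top digit `q` with the top digit stripped, and a
character `α` with top digit `q` and remainder `α'`: `rank_α(i)` over `T`
equals `rank_{α'}(rank_q(i))` over `T_q`. -/
theorem four_ary_wavelet_tree_rank_recursion (ℓ n : ℕ) (hℓ : 1 ≤ ℓ)
    (T : Fin n → Fin (4 ^ ℓ)) (α : Fin (4 ^ ℓ)) (i : ℕ) :
    let tl : List ℕ := (List.ofFn T).map (fun c => (c : ℕ))
    let q : ℕ := (α : ℕ) / 4 ^ (ℓ - 1)
    let Q : List ℕ := tl.map (fun c => c / 4 ^ (ℓ - 1))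
    let Tq : List ℕ :=
      (tl.filter (fun c => c / 4 ^ (ℓ - 1) == q)).map (fun c => c % 4 ^ (ℓ - 1))
    lrank tl (α : ℕ) i = lrank Tq ((α : ℕ) % 4 ^ (ℓ - 1)) (lrank Q q i) := by
  intro tl q Q Tq
  exact lrank_key (4 ^ (ℓ - 1)) (α : ℕ) tl i
end
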